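/- Let {X_n}, {Y_n} be sequences of real random variables both converging in distribution to a random variable U, and let {Z_n} be a sequence of real random variables such that X_n(1 − p_n) ≤ Z_n ≤ Y_n(1 + q_n) almost surely for every n, where {p_n} and {q_n} are sequences of random variables converging to 0 in probability. Then Z_n converges in distribution to U. (Lemma C.4: squeeze theorem for convergence in distribution.) -/

import Mathlib

/-!
Realising all the variables on the single product space `∀ n, Ω n` makes Mathlib's Slutsky
theorem applicable, so `Xₙ (1 - pₙ)` and `Yₙ (1 + qₙ)` converge in distribution to `U`. For a
monotone bounded continuous `g` the squeeze gives `∫ g (Xₙ (1 - pₙ)) ≤ ∫ g Zₙ ≤ ∫ g (Yₙ (1 + qₙ))`,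
hence `∫ g Zₙ → ∫ g U`. These `g` span a point-separating algebra (shifted to be nonnegative, two
of them have a monotone product), and the squeeze also makes the laws of `Zₙ` tight, so by
Prokhorov's theorem they converge to the law of `U`.
-/

open MeasureTheory ProbabilityTheory Filter Matrix BoundedContinuousFunction
open scoped BigOperators ENNReal NNReal Topology Classical

noncomputable section

/-- Points of `ℝ^d` with the Euclidean structure. -/
abbrev Pt (d : ℕ) := EuclideanSpace ℝ (Fin d)

/-- `N = ⌊n^(1/d)⌋`. -/
def Nof (d n : ℕ) : ℕ := Nat.floor ((n : ℝ) ^ ((1 : ℝ) / (d : ℝ)))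

/-- Quasi-uniformity of the `n`-point sampling set `D ⊂ ℝ^d`: for every `s ∈ D` there is an
enumeration of `D \ {s}` which is monotone in the distance to `s` (so that its `i`-th element is
the `i`-th nearest neighbour of `s`), whose distances obey the two-sided bound
`Cmin (i/n)^{1/d} ≤ r_{s,i} ≤ Cmax (i/n)^{1/d}`. -/
def QuasiUniform (d n : ℕ) (Cmin Cmax : ℝ) (D : Finset (Pt d)) : Prop :=
  D.card = n ∧
  ∀ s ∈ D, ∃ g : Fin (n - 1) → Pt d,
    (∀ i, g i ∈ D.erase s) ∧ Function.Injective g ∧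
    (∀ t ∈ D.erase s, ∃ i, g i = t) ∧
    (∀ i j : Fin (n - 1), i ≤ j → dist s (g i) ≤ dist s (g j)) ∧
    (∀ i : Fin (n - 1),
      Cmin * (((i : ℕ) + 1 : ℝ) / (n : ℝ)) ^ ((1 : ℝ) / (d : ℝ)) ≤ dist s (g i) ∧
      dist s (g i) ≤ Cmax * (((i : ℕ) + 1 : ℝ) / (n : ℝ)) ^ ((1 : ℝ) / (d : ℝ)))

/-- Preconditioning neighbourhoods `nb` and coefficients `a` of order `m` for the set `D`:
each `N_m(s) = nb s` lies in `D` within distance `c₀/N` of `s`; the coefficients annihilate all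
monomials `(t-s)^r` with `|r|₁ < m`, do not annihilate some monomial with `|r|₁ ≥ m`, and are
normalized in Euclidean norm. -/
def PrecondCoeffs (d m : ℕ) (c₀ : ℝ) (N : ℕ) (D : Finset (Pt d))
    (nb : Pt d → Finset (Pt d)) (a : Pt d → Pt d → ℝ) : Prop :=
  ∀ s ∈ D,
    nb s ⊆ D ∧
    (∀ t ∈ nb s, ‖t - s‖ ≤ c₀ / (N : ℝ)) ∧
    (∀ r : Fin d → ℕ, (∑ j, r j) < m →
      (∑ t ∈ nb s, a s t * ∏ j, (t j - s j) ^ r j) = 0) ∧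
    (∃ r : Fin d → ℕ, m ≤ (∑ j, r j) ∧
      (∑ t ∈ nb s, a s t * ∏ j, (t j - s j) ^ r j) ≠ 0) ∧
    (∑ t ∈ nb s, (a s t) ^ 2) = 1

/-- The Fourier filter `f^N_s(ω)` of the preconditioning coefficients. -/
def fN (d : ℕ) (ν : ℝ) (N : ℕ) (nb : Pt d → Finset (Pt d))
    (a : Pt d → Pt d → ℝ) (s ω : Pt d) : ℂ :=
  ((‖ω‖ ^ (-(ν + (d : ℝ) / 2)) : ℝ) : ℂ) *
    ∑ t ∈ nb s, ((a s t : ℝ) : ℂ) *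
      Complex.exp (Complex.I * ((inner ℝ ((N : ℝ) • ω) (t - s) : ℝ) : ℂ))

/-- `h_N(x) = (1 + (Nx)^{-2})^{-(ν + d/2)}`. -/
def hN (d : ℕ) (ν : ℝ) (N : ℕ) (x : ℝ) : ℝ :=
  (1 + ((N : ℝ) * x) ^ (-(2 : ℝ))) ^ (-(ν + (d : ℝ) / 2))

/-- The matrix `K_{n,m}(ρ)`, the `φ₀`-normalized covariance matrix of the preconditioned data,
given through its spectral representation. -/
def Kmat {d : ℕ} (ν : ℝ) (N : ℕ) (D : Finset (Pt d))
    (nb : Pt d → Finset (Pt d)) (a : Pt d → Pt d → ℝ) (ρ : ℝ) :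
    Matrix D D ℝ :=
  Matrix.of fun s t =>
    ρ ^ (-(2 * ν)) *
      (∫ (ω : Pt d),
        Complex.exp (Complex.I * ((inner ℝ ((t : Pt d) - (s : Pt d)) ω : ℝ) : ℂ)) *
          fN d ν N nb a (s : Pt d) ω * (starRingEnd ℂ) (fN d ν N nb a (t : Pt d) ω) *
          ((hN d ν N (ρ * ‖ω‖) : ℝ) : ℂ)).re

/-- Block-diagonal restriction of a matrix along the partition determined by a labelling `bin`. -/
def bdiag {d : ℕ} {D : Finset (Pt d)} (bin : Pt d → ℕ) (A : Matrix D D ℝ) :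
    Matrix D D ℝ :=
  Matrix.of fun s t => if bin (s : Pt d) = bin (t : Pt d) then A s t else 0

/-- `L_{n,m}(ρ) = ρ^{2ν} K_{n,m}(ρ)`. -/
def Lmat {d : ℕ} (ν : ℝ) (N : ℕ) (D : Finset (Pt d))
    (nb : Pt d → Finset (Pt d)) (a : Pt d → Pt d → ℝ) (ρ : ℝ) :
    Matrix D D ℝ :=
  ρ ^ (2 * ν) • Kmat ν N D nb a ρ

/-- `K^B_{n,m}(ρ)`: the block-diagonal approximation of `K_{n,m}(ρ)`. -/
def KmatB {d : ℕ} (ν : ℝ) (N : ℕ) (D : Finset (Pt d))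
    (nb : Pt d → Finset (Pt d)) (a : Pt d → Pt d → ℝ) (bin : Pt d → ℕ) (ρ : ℝ) :
    Matrix D D ℝ := bdiag bin (Kmat ν N D nb a ρ)

/-- `L^B_{n,m}(ρ) = ρ^{2ν} K^B_{n,m}(ρ)`. -/
def LmatB {d : ℕ} (ν : ℝ) (N : ℕ) (D : Finset (Pt d))
    (nb : Pt d → Finset (Pt d)) (a : Pt d → Pt d → ℝ) (bin : Pt d → ℕ) (ρ : ℝ) :
    Matrix D D ℝ := bdiag bin (Lmat ν N D nb a ρ)

/-- Euclidean norm of a finite-dimensional real vector. -/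
def eNorm {ι : Type*} [Fintype ι] (v : ι → ℝ) : ℝ := Real.sqrt (∑ i, (v i) ^ 2)

/-- Frobenius norm of a real matrix. -/
def frobNorm {ι : Type*} [Fintype ι] (A : Matrix ι ι ℝ) : ℝ :=
  Real.sqrt (∑ i, ∑ j, (A i j) ^ 2)

/-- The `ℓ² → ℓ²` operator (spectral) norm of a real matrix. -/
def opNorm {ι : Type*} [Fintype ι] (A : Matrix ι ι ℝ) : ℝ :=
  sSup {c : ℝ | ∃ v : ι → ℝ, eNorm v ≤ 1 ∧ c = eNorm (A.mulVec v)}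

/-- The nuclear norm (sum of singular values): trace of the psd square root of `Aᵀ A`. -/
def nucNorm {ι : Type*} [Fintype ι] [DecidableEq ι] (A : Matrix ι ι ℝ) : ℝ :=
  (((Matrix.posSemidef_conjTranspose_mul_self A).1.eigenvectorUnitary : Matrix ι ι ℝ) *
    Matrix.diagonal ((RCLike.ofReal : ℝ → ℝ) ∘ (Real.sqrt ·) ∘ (Matrix.posSemidef_conjTranspose_mul_self A).1.eigenvalues) *
    (star ((Matrix.posSemidef_conjTranspose_mul_self A).1.eigenvectorUnitary : Matrix ι ι ℝ))).trace

/-- The standard Gaussian product measure on `ι → ℝ`. -/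
def stdGaussianPi (ι : Type*) [Fintype ι] : Measure (ι → ℝ) :=
  Measure.pi fun _ => gaussianReal 0 1

end

namespace BoundedContinuousFunction

variable {α : Type*} [TopologicalSpace α]

theorem add_const_norm_nonneg (f : α →ᵇ ℝ) (x : α) : 0 ≤ (f + const α ‖f‖) x := by
  have := neg_abs_le (f x) |>.trans' (neg_le_neg (f.norm_coe_le_norm x))
  simp only [coe_add, const_apply, Pi.add_apply]
  linarith

variable [Preorder α]

theorem monotone_add_const_norm {f : α →ᵇ ℝ} (hf : Monotone f) :
    Monotone (f + const α ‖f‖) := fun _ _ h => by simpa using hf h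

theorem mul_mem_span_monotone {f g : α →ᵇ ℝ} (hf : Monotone f) (hg : Monotone g) :
    f * g ∈ Submodule.span ℝ {h : α →ᵇ ℝ | Monotone h} := by
  have mem {h : α →ᵇ ℝ} (hh : Monotone h) : h ∈ Submodule.span ℝ {h : α →ᵇ ℝ | Monotone h} :=
    Submodule.subset_span hh
  have hprod : Monotone ((f + const α ‖f‖) * (g + const α ‖g‖)) := by
    rw [coe_mul]
    exact (monotone_add_const_norm hf).mul (monotone_add_const_norm hg)
      f.add_const_norm_nonneg g.add_const_norm_nonneg
  have hconst : Monotone (const α (‖f‖ * ‖g‖)) := monotone_const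
  have : f * g = (f + const α ‖f‖) * (g + const α ‖g‖) - ‖g‖ • f - ‖f‖ • g
      - const α (‖f‖ * ‖g‖) := by
    ext x; simp; ring
  rw [this]
  exact Submodule.sub_mem _ (Submodule.sub_mem _ (Submodule.sub_mem _ (mem hprod)
    (Submodule.smul_mem _ _ (mem hf))) (Submodule.smul_mem _ _ (mem hg))) (mem hconst)

theorem span_monotone_mul_le :
    Submodule.span ℝ {h : α →ᵇ ℝ | Monotone h} * Submodule.span ℝ {h : α →ᵇ ℝ | Monotone h} ≤
      Submodule.span ℝ {h : α →ᵇ ℝ | Monotone h} := by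
  rw [Submodule.span_mul_span]
  exact Submodule.span_le.2 (by rintro _ ⟨f, hf, g, hg, rfl⟩; exact mul_mem_span_monotone hf hg)

noncomputable def monotoneSpan : StarSubalgebra ℝ (α →ᵇ ℝ) where
  toSubalgebra := (Submodule.span ℝ {h : α →ᵇ ℝ | Monotone h}).toSubalgebra
    (Submodule.subset_span monotone_const) fun _ _ hx hy =>
      span_monotone_mul_le (Submodule.mul_mem_mul hx hy)
  star_mem' {f} hf := by
    convert hf
    ext; simp

theorem separatesPoints_monotoneSpan :
    ((monotoneSpan (α := ℝ)).map (toContinuousMapStarₐ ℝ)).SeparatesPoints := by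
  intro x y hxy
  let arctan : ℝ →ᵇ ℝ := ofNormedAddCommGroup Real.arctan Real.continuous_arctan (Real.pi / 2)
    fun x => (abs_lt.2 ⟨Real.neg_pi_div_two_lt_arctan x, Real.arctan_lt_pi_div_two x⟩).le
  refine ⟨_, ⟨_, ⟨arctan, Submodule.subset_span ?_, rfl⟩, rfl⟩, ?_⟩
  · exact Real.arctan_strictMono.monotone
  · simpa [arctan] using Real.arctan_injective.ne hxy

end BoundedContinuousFunction

namespace MeasureTheory

variable {ι E Ω' : Type*} {Ω : ι → Type*} {m : ∀ i, MeasurableSpace (Ω i)}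
  {μ : ∀ i, Measure (Ω i)} {l : Filter ι}

theorem integral_comp_le_of_monotone_of_ae_le [TopologicalSpace E] [MeasurableSpace E]
    [OpensMeasurableSpace E] [Preorder E] {α : Type*} {_ : MeasurableSpace α} {ν : Measure α}
    [IsFiniteMeasure ν] {g : E →ᵇ ℝ} (hg : Monotone g) {A B : α → E} (hA : AEMeasurable A ν)
    (hB : AEMeasurable B ν) (hAB : A ≤ᵐ[ν] B) : ∫ x, g (A x) ∂ν ≤ ∫ x, g (B x) ∂ν :=
  integral_mono_ae ((g.integrable _).comp_aemeasurable hA) ((g.integrable _).comp_aemeasurable hB)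
    (hAB.mono fun _ h => hg h)

theorem map_norm_gt_le_of_ae_le_of_ae_le {α : Type*} {_ : MeasurableSpace α} {ν : Measure α}
    {A Z B : α → ℝ} (hAm : AEMeasurable A ν) (hBm : AEMeasurable B ν) (hZm : AEMeasurable Z ν)
    (hAZ : A ≤ᵐ[ν] Z) (hZB : Z ≤ᵐ[ν] B) (r : ℝ) :
    ν.map Z {x | r < ‖x‖} ≤ ν.map A {x | r < ‖x‖} + ν.map B {x | r < ‖x‖} := by
  have hr : MeasurableSet {x : ℝ | r < ‖x‖} := measurableSet_lt measurable_const measurable_norm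
  rw [Measure.map_apply_of_aemeasurable hZm hr, Measure.map_apply_of_aemeasurable hAm hr,
    Measure.map_apply_of_aemeasurable hBm hr]
  refine (measure_mono_ae ?_).trans (measure_union_le _ _)
  filter_upwards [hAZ, hZB] with x hA hB (hZ : r < |Z x|)
  rcases lt_abs.1 hZ with h | h
  · exact Or.inr (lt_abs.2 (Or.inl (h.trans_le hB)))
  · exact Or.inl (lt_abs.2 (Or.inr (h.trans_le (neg_le_neg hA))))

theorem isTightMeasureSet_range_map_of_ae_le_of_ae_le {A Z B : ∀ i, Ω i → ℝ}
    (hA : IsTightMeasureSet (Set.range fun i => (μ i).map (A i)))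
    (hB : IsTightMeasureSet (Set.range fun i => (μ i).map (B i)))
    (hAm : ∀ i, AEMeasurable (A i) (μ i)) (hBm : ∀ i, AEMeasurable (B i) (μ i))
    (hZm : ∀ i, AEMeasurable (Z i) (μ i))
    (hAZ : ∀ i, A i ≤ᵐ[μ i] Z i) (hZB : ∀ i, Z i ≤ᵐ[μ i] B i) :
    IsTightMeasureSet (Set.range fun i => (μ i).map (Z i)) := by
  rw [isTightMeasureSet_iff_tendsto_measure_norm_gt] at hA hB ⊢
  refine tendsto_of_tendsto_of_tendsto_of_le_of_le tendsto_const_nhds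
    (by simpa only [add_zero] using hA.add hB) (fun _ => zero_le) fun r => iSup₂_le ?_
  rintro _ ⟨i, rfl⟩
  refine (map_norm_gt_le_of_ae_le_of_ae_le (hAm i) (hBm i) (hZm i) (hAZ i) (hZB i) r).trans ?_
  exact add_le_add (le_iSup₂_of_le _ ⟨i, rfl⟩ le_rfl) (le_iSup₂_of_le _ ⟨i, rfl⟩ le_rfl)

theorem tendsto_measure_dist_ge_of_tendsto_measure_abs_gt {p : ∀ i, Ω i → ℝ}
    (hp : ∀ ε : ℝ, 0 < ε → Tendsto (fun i => μ i {ω | ε < |p i ω|}) l (𝓝 0)) :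
    ∀ ε > 0, Tendsto (fun i => μ i {ω | ε ≤ dist (p i ω) 0}) l (𝓝 0) := by
  intro ε hε
  refine tendsto_of_tendsto_of_tendsto_of_le_of_le tendsto_const_nhds (hp (ε / 2) (half_pos hε))
    (fun _ => zero_le) fun i => measure_mono fun ω (hω : ε ≤ dist (p i ω) 0) => ?_
  change ε / 2 < |p i ω|
  rw [Real.dist_0_eq_abs] at hω
  linarith

variable [∀ i, IsProbabilityMeasure (μ i)] {m' : MeasurableSpace Ω'} {μ' : Measure Ω'}
  [IsProbabilityMeasure μ'] {mE : MeasurableSpace E} {X : ∀ i, Ω i → E} {Z : Ω' → E}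

theorem tendstoInDistribution_iff_forall_integral_tendsto [TopologicalSpace E]
    [OpensMeasurableSpace E] (hX : ∀ i, AEMeasurable (X i) (μ i)) (hZ : AEMeasurable Z μ') :
    TendstoInDistribution X l Z μ μ' ↔ ∀ f : E →ᵇ ℝ,
      Tendsto (fun i => ∫ ω, f (X i ω) ∂μ i) l (𝓝 (∫ ω, f (Z ω) ∂μ')) := by
  have eX (f : E →ᵇ ℝ) (i : ι) : ∫ x, f x ∂(μ i).map (X i) = ∫ ω, f (X i ω) ∂μ i :=
    integral_map (hX i) f.continuous.aestronglyMeasurable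
  have eZ (f : E →ᵇ ℝ) : ∫ x, f x ∂μ'.map Z = ∫ ω, f (Z ω) ∂μ' :=
    integral_map hZ f.continuous.aestronglyMeasurable
  refine ⟨fun h f => ?_, fun h => ⟨hX, hZ, ?_⟩⟩
  · simpa only [ProbabilityMeasure.coe_mk, eX, eZ] using
      ProbabilityMeasure.tendsto_iff_forall_integral_tendsto.1 h.tendsto f
  · refine ProbabilityMeasure.tendsto_iff_forall_integral_tendsto.2 fun f => ?_
    simpa only [ProbabilityMeasure.coe_mk, eX, eZ] using h f

theorem aemeasurable_comp_eval_infinitePi {Y : ∀ i, Ω i → E} {i : ι}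
    (hY : AEMeasurable (Y i) (μ i)) :
    AEMeasurable (fun ω : ∀ j, Ω j => Y i (ω i)) (Measure.infinitePi μ) := by
  have hp := measurePreserving_eval_infinitePi μ i
  exact (hp.map_eq ▸ hY).comp_aemeasurable hp.measurable.aemeasurable

theorem map_comp_eval_infinitePi {Y : ∀ i, Ω i → E} {i : ι} (hY : AEMeasurable (Y i) (μ i)) :
    (Measure.infinitePi μ).map (fun ω => Y i (ω i)) = (μ i).map (Y i) := by
  have hp := measurePreserving_eval_infinitePi μ i
  rw [← hp.map_eq, AEMeasurable.map_map_of_aemeasurable (hp.map_eq ▸ hY) hp.measurable.aemeasurable]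
  rfl

theorem tendstoInDistribution_comp_eval_infinitePi_iff [TopologicalSpace E]
    [OpensMeasurableSpace E] (hX : ∀ i, AEMeasurable (X i) (μ i)) :
    TendstoInDistribution (fun i (ω : ∀ j, Ω j) => X i (ω i)) l Z
      (fun _ => Measure.infinitePi μ) μ' ↔ TendstoInDistribution X l Z μ μ' := by
  have hlaw (i : ι) := map_comp_eval_infinitePi (hX i)
  refine ⟨fun h => ⟨hX, h.aemeasurable_limit, ?_⟩,
    fun h => ⟨fun i => aemeasurable_comp_eval_infinitePi (hX i), h.aemeasurable_limit, ?_⟩⟩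
  · exact h.tendsto.congr fun i => Subtype.ext (hlaw i)
  · exact h.tendsto.congr fun i => Subtype.ext (hlaw i).symm

theorem tendstoInMeasure_comp_eval_infinitePi_iff [PseudoMetricSpace E] [OpensMeasurableSpace E]
    {p : ∀ i, Ω i → E} (hp : ∀ i, AEMeasurable (p i) (μ i)) {c : E} :
    TendstoInMeasure (Measure.infinitePi μ) (fun i ω => p i (ω i)) l (fun _ => c) ↔
      ∀ ε > 0, Tendsto (fun i => μ i {ω | ε ≤ dist (p i ω) c}) l (𝓝 0) := by
  have hS (ε : ℝ) : MeasurableSet {x : E | ε ≤ dist x c} :=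
    measurableSet_le measurable_const (continuous_id.dist continuous_const).measurable
  have e (ε : ℝ) (i : ι) : Measure.infinitePi μ {ω | ε ≤ dist (p i (ω i)) c} =
      μ i {ω | ε ≤ dist (p i ω) c} := calc
    _ = (Measure.infinitePi μ).map (fun ω => p i (ω i)) {x | ε ≤ dist x c} :=
      (Measure.map_apply_of_aemeasurable (aemeasurable_comp_eval_infinitePi (hp i)) (hS ε)).symm
    _ = _ := by
      rw [map_comp_eval_infinitePi (hp i), Measure.map_apply_of_aemeasurable (hp i) (hS ε)]
      rfl
  simp only [tendstoInMeasure_iff_dist, e]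

theorem TendstoInDistribution.continuous_comp_prodMk_of_tendsto_measure_dist_ge
    {E' F : Type*} {mE' : MeasurableSpace E'} [SeminormedAddCommGroup E]
    [SecondCountableTopology E] [BorelSpace E] [SeminormedAddCommGroup E']
    [SecondCountableTopology E'] [BorelSpace E'] [TopologicalSpace F] [MeasurableSpace F]
    [BorelSpace F] [l.IsCountablyGenerated] {g : E × E' → F} (hg : Continuous g)
    {p : ∀ i, Ω i → E'} {c : E'} (hX : TendstoInDistribution X l Z μ μ')
    (hpm : ∀ i, AEMeasurable (p i) (μ i))
    (hp : ∀ ε > 0, Tendsto (fun i => μ i {ω | ε ≤ dist (p i ω) c}) l (𝓝 0)) :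
    TendstoInDistribution (fun i ω => g (X i ω, p i ω)) l (fun ω => g (Z ω, c)) μ μ' := by
  have hXp (i : ι) : AEMeasurable (fun ω => g (X i ω, p i ω)) (μ i) :=
    hg.measurable.comp_aemeasurable ((hX.forall_aemeasurable i).prodMk (hpm i))
  rw [← tendstoInDistribution_comp_eval_infinitePi_iff hXp]
  exact ((tendstoInDistribution_comp_eval_infinitePi_iff hX.forall_aemeasurable).2 hX
    ).continuous_comp_prodMk_of_tendstoInMeasure_const hg
    ((tendstoInMeasure_comp_eval_infinitePi_iff hpm).2 hp)
    fun i => aemeasurable_comp_eval_infinitePi (hpm i)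

theorem TendstoInDistribution.isTightMeasureSet_range [PseudoMetricSpace E] [CompleteSpace E]
    [SecondCountableTopology E] [BorelSpace E] {Ω : ℕ → Type*} {m : ∀ n, MeasurableSpace (Ω n)}
    {μ : ∀ n, Measure (Ω n)} [∀ n, IsProbabilityMeasure (μ n)] {X : ∀ n, Ω n → E}
    (h : TendstoInDistribution X atTop Z μ μ') :
    IsTightMeasureSet (Set.range fun n => (μ n).map (X n)) := by
  have hK := h.tendsto.isCompact_insert_range
  convert isTightMeasureSet_of_isCompact_closure (hK.closure_of_subset (Set.subset_insert _ _))
  exact Set.range_comp ((↑) : ProbabilityMeasure E → Measure E)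
    fun n => ⟨(μ n).map (X n), Measure.isProbabilityMeasure_map (h.forall_aemeasurable n)⟩

theorem tendsto_integral_comp_of_monotone_of_ae_le_of_ae_le {A Z B : ∀ i, Ω i → ℝ} {U : Ω' → ℝ}
    (hA : TendstoInDistribution A l U μ μ') (hB : TendstoInDistribution B l U μ μ')
    (hZ : ∀ i, AEMeasurable (Z i) (μ i)) (hAZ : ∀ i, A i ≤ᵐ[μ i] Z i)
    (hZB : ∀ i, Z i ≤ᵐ[μ i] B i) {g : ℝ →ᵇ ℝ} (hg : Monotone g) :
    Tendsto (fun i => ∫ ω, g (Z i ω) ∂μ i) l (𝓝 (∫ ω, g (U ω) ∂μ')) := by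
  have hAm := hA.forall_aemeasurable
  have hBm := hB.forall_aemeasurable
  have hU := hA.aemeasurable_limit
  exact tendsto_of_tendsto_of_tendsto_of_le_of_le
    ((tendstoInDistribution_iff_forall_integral_tendsto hAm hU).1 hA g)
    ((tendstoInDistribution_iff_forall_integral_tendsto hBm hU).1 hB g)
    (fun i => integral_comp_le_of_monotone_of_ae_le hg (hAm i) (hZ i) (hAZ i))
    (fun i => integral_comp_le_of_monotone_of_ae_le hg (hZ i) (hBm i) (hZB i))

theorem tendstoInDistribution_of_ae_le_of_ae_le {Ω : ℕ → Type*} {m : ∀ n, MeasurableSpace (Ω n)}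
    {μ : ∀ n, Measure (Ω n)} [∀ n, IsProbabilityMeasure (μ n)] {A Z B : ∀ n, Ω n → ℝ}
    {U : Ω' → ℝ} (hA : TendstoInDistribution A atTop U μ μ')
    (hB : TendstoInDistribution B atTop U μ μ') (hZ : ∀ n, AEMeasurable (Z n) (μ n))
    (hAZ : ∀ n, A n ≤ᵐ[μ n] Z n) (hZB : ∀ n, Z n ≤ᵐ[μ n] B n) :
    TendstoInDistribution Z atTop U μ μ' := by
  have hU := hA.aemeasurable_limit
  refine ⟨hZ, hU, ProbabilityMeasure.tendsto_of_tight_of_separatesPoints ℝ ?_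
    separatesPoints_monotoneSpan fun g hg => ?_⟩
  · convert isTightMeasureSet_range_map_of_ae_le_of_ae_le hA.isTightMeasureSet_range
      hB.isTightMeasureSet_range hA.forall_aemeasurable hB.forall_aemeasurable hZ hAZ hZB
    rfl
  · change g ∈ Submodule.span ℝ _ at hg
    simp only [ProbabilityMeasure.coe_mk]
    induction hg using Submodule.span_induction with
    | mem g hg =>
      simpa only [integral_map (hZ _) g.continuous.aestronglyMeasurable,
        integral_map hU g.continuous.aestronglyMeasurable] using
        tendsto_integral_comp_of_monotone_of_ae_le_of_ae_le hA hB hZ hAZ hZB hg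
    | zero => simp
    | add f g _ _ hf hg =>
      convert hf.add hg using 2 <;> exact integral_add (f.integrable _) (g.integrable _)
    | smul c g _ hg => simpa only [coe_smul, integral_smul] using hg.const_smul c

end MeasureTheory

/-- **Lemma C.4 (squeeze theorem for convergence in distribution).**  If `Xₙ → U` and `Yₙ → U`
in distribution, `Xₙ(1 - pₙ) ≤ Zₙ ≤ Yₙ(1 + qₙ)` almost surely for every `n`, and `pₙ, qₙ → 0`
in probability, then `Zₙ → U` in distribution.  Convergence in distribution is expressed through
bounded continuous test functions. -/
theorem stmt16
    (Ω : ℕ → Type) (mΩ : ∀ n, MeasurableSpace (Ω n))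
    (P : ∀ n, Measure (Ω n)) (hP : ∀ n, IsProbabilityMeasure (P n))
    (X Y Z p q : ∀ n, Ω n → ℝ)
    (hmX : ∀ n, Measurable (X n)) (hmY : ∀ n, Measurable (Y n))
    (hmZ : ∀ n, Measurable (Z n)) (hmp : ∀ n, Measurable (p n)) (hmq : ∀ n, Measurable (q n))
    (Ω' : Type) (mΩ' : MeasurableSpace Ω') (Q : Measure Ω') (hQ : IsProbabilityMeasure Q)
    (U : Ω' → ℝ) (hmU : Measurable U)
    (hX : ∀ f : ℝ →ᵇ ℝ,
      Tendsto (fun n => ∫ ω, f (X n ω) ∂(P n)) atTop (𝓝 (∫ x, f (U x) ∂Q)))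
    (hY : ∀ f : ℝ →ᵇ ℝ,
      Tendsto (fun n => ∫ ω, f (Y n ω) ∂(P n)) atTop (𝓝 (∫ x, f (U x) ∂Q)))
    (hsq : ∀ n, ∀ᵐ ω ∂(P n), X n ω * (1 - p n ω) ≤ Z n ω ∧ Z n ω ≤ Y n ω * (1 + q n ω))
    (hp : ∀ ε : ℝ, 0 < ε → Tendsto (fun n => P n {ω | ε < |p n ω|}) atTop (𝓝 0))
    (hq : ∀ ε : ℝ, 0 < ε → Tendsto (fun n => P n {ω | ε < |q n ω|}) atTop (𝓝 0)) :
    ∀ f : ℝ →ᵇ ℝ,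
      Tendsto (fun n => ∫ ω, f (Z n ω) ∂(P n)) atTop (𝓝 (∫ x, f (U x) ∂Q)) := by
  have hXd : TendstoInDistribution X atTop U P Q :=
    (tendstoInDistribution_iff_forall_integral_tendsto (fun n => (hmX n).aemeasurable)
      hmU.aemeasurable).2 hX
  have hYd : TendstoInDistribution Y atTop U P Q :=
    (tendstoInDistribution_iff_forall_integral_tendsto (fun n => (hmY n).aemeasurable)
      hmU.aemeasurable).2 hY
  have hlow : TendstoInDistribution (fun n ω => X n ω * (1 - p n ω)) atTop U P Q := by
    convert hXd.continuous_comp_prodMk_of_tendsto_measure_dist_ge (g := fun x => x.1 * (1 - x.2))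
      (by fun_prop) (fun n => (hmp n).aemeasurable)
      (tendsto_measure_dist_ge_of_tendsto_measure_abs_gt hp) using 1
    simp
  have hup : TendstoInDistribution (fun n ω => Y n ω * (1 + q n ω)) atTop U P Q := by
    convert hYd.continuous_comp_prodMk_of_tendsto_measure_dist_ge (g := fun x => x.1 * (1 + x.2))
      (by fun_prop) (fun n => (hmq n).aemeasurable)
      (tendsto_measure_dist_ge_of_tendsto_measure_abs_gt hq) using 1
    simp
  have hZd : TendstoInDistribution Z atTop U P Q :=
    tendstoInDistribution_of_ae_le_of_ae_le hlow hup (fun n => (hmZ n).aemeasurable)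
      (fun n => (hsq n).mono fun _ h => h.1) (fun n => (hsq n).mono fun _ h => h.2)
  exact (tendstoInDistribution_iff_forall_integral_tendsto (fun n => (hmZ n).aemeasurable)
    hmU.aemeasurable).1 hZd
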